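/- Let a, c be nonzero integers, d ≥ 2 an integer, and f(X) = aX^d - acX^{d-1} + c ∈ ℤ[X]. Then for every n ≥ 1: the iterate f^(n) has leading coefficient a^{(d^n - 1)/(d-1)} (in particular a power of a), every coefficient of f^(n) other than the leading one is divisible by c, and f^(n)(0) = c. In particular, 0 is pre-periodic under f. -/

import Mathlib

/-!
Leading coefficients multiply under composition, `lc (p.comp q) = lc p * lc q ^ deg p`, which
gives `lc f^(n) = a ^ (1 + d + ⋯ + d^(n-1))`. Modulo `c` the polynomial `f` is the monomial
`a X^d`, so modulo `c` every iterate `f^(n)` is a monomial of degree `d^n`: its other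
coefficients are divisible by `c`. Finally `f(0) = c` and `f(c) = c`, so the orbit of `0` is `{c}`.
-/

open Polynomial

/-- The `n`-th iterate of a polynomial: `f^(0) = X`, `f^(n) = f(f^(n-1))`. -/
noncomputable def polyIter {R : Type*} [CommSemiring R] (f : R[X]) : ℕ → R[X]
  | 0 => X
  | n + 1 => f.comp (polyIter f n)

section PolyIter

variable {R : Type*} [CommSemiring R]

theorem eval_polyIter (f : R[X]) (n : ℕ) (x : R) :
    (polyIter f n).eval x = (fun y => f.eval y)^[n] x := by
  induction n with
  | zero => simp [polyIter]
  | succ n ih => rw [polyIter, eval_comp, ih, Function.iterate_succ_apply']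

theorem eval_polyIter_of_eval_eq_of_isFixedPt {f : R[X]} {x y : R} (hx : f.eval x = y)
    (hy : f.eval y = y) {n : ℕ} (hn : 1 ≤ n) : (polyIter f n).eval x = y := by
  obtain ⟨m, rfl⟩ := Nat.exists_eq_add_of_le' hn
  rw [eval_polyIter, Function.iterate_succ_apply, hx]
  exact Function.iterate_fixed hy m

theorem map_polyIter {S : Type*} [CommSemiring S] (φ : R →+* S) (f : R[X]) (n : ℕ) :
    (polyIter f n).map φ = polyIter (f.map φ) n := by
  induction n with
  | zero => simp [polyIter]
  | succ n ih => rw [polyIter, polyIter, map_comp, ih]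

theorem polyIter_C_mul_X_pow (b : R) (d n : ℕ) :
    polyIter (C b * X ^ d) n = C (b ^ ∑ i ∈ Finset.range n, d ^ i) * X ^ d ^ n := by
  induction n with
  | zero => simp [polyIter]
  | succ n ih =>
    rw [polyIter, ih, geom_sum_succ]
    simp only [mul_comp, C_comp, X_comp, pow_comp, mul_pow, ← C_pow, ← pow_mul, ← mul_assoc,
      ← C_mul]
    congr 2
    ring

variable [NoZeroDivisors R] [Nontrivial R]

theorem natDegree_polyIter (f : R[X]) (n : ℕ) :
    (polyIter f n).natDegree = f.natDegree ^ n := by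
  induction n with
  | zero => simp [polyIter]
  | succ n ih => rw [polyIter, natDegree_comp, ih, pow_succ']

theorem leadingCoeff_polyIter {f : R[X]} (hf : 0 < f.natDegree) (n : ℕ) :
    (polyIter f n).leadingCoeff = f.leadingCoeff ^ ∑ i ∈ Finset.range n, f.natDegree ^ i := by
  induction n with
  | zero => simp [polyIter]
  | succ n ih =>
    rw [polyIter, leadingCoeff_comp (by rw [natDegree_polyIter]; positivity), ih, geom_sum_succ]
    ring

end PolyIter

theorem dvd_coeff_polyIter {R : Type*} [CommRing R] {f : R[X]} {c : R} {d : ℕ}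
    (hf : ∀ i ≠ d, c ∣ f.coeff i) (n : ℕ) : ∀ i ≠ d ^ n, c ∣ (polyIter f n).coeff i := by
  set φ := Ideal.Quotient.mk (Ideal.span {c})
  have hf_mod : f.map φ = C (φ (f.coeff d)) * X ^ d := by
    ext i
    rw [coeff_map, coeff_C_mul_X_pow]
    split_ifs with hi
    · rw [hi]
    · exact (Ideal.Quotient.eq_zero_iff_dvd c _).2 (hf i hi)
  intro i hi
  rw [← Ideal.Quotient.eq_zero_iff_dvd, ← coeff_map, map_polyIter, hf_mod,
    polyIter_C_mul_X_pow, coeff_C_mul_X_pow, if_neg hi]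

section EisensteinFamily

variable {R : Type*} [CommRing R]

noncomputable def eisensteinFamily (a c : R) (d : ℕ) : R[X] :=
  C a * X ^ d - C (a * c) * X ^ (d - 1) + C c

variable {a c : R} {d : ℕ}

theorem coeff_eisensteinFamily_self (hd : 1 ≤ d) : (eisensteinFamily a c d).coeff d = a := by
  rw [eisensteinFamily, coeff_add, coeff_sub, coeff_C_mul_X_pow, coeff_C_mul_X_pow, coeff_C,
    if_pos rfl, if_neg (show d ≠ d - 1 by omega), if_neg (show d ≠ 0 by omega), sub_zero,
    add_zero]

theorem dvd_coeff_eisensteinFamily {i : ℕ} (hi : i ≠ d) :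
    c ∣ (eisensteinFamily a c d).coeff i := by
  simp only [eisensteinFamily, coeff_add, coeff_sub, coeff_C_mul_X_pow, coeff_C, if_neg hi]
  split_ifs <;> simp

theorem natDegree_eisensteinFamily (ha : a ≠ 0) (hd : 1 ≤ d) :
    (eisensteinFamily a c d).natDegree = d :=
  natDegree_eq_of_le_of_coeff_ne_zero (by unfold eisensteinFamily; compute_degree)
    (by rwa [coeff_eisensteinFamily_self hd])

theorem leadingCoeff_eisensteinFamily (ha : a ≠ 0) (hd : 1 ≤ d) :
    (eisensteinFamily a c d).leadingCoeff = a := by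
  rw [leadingCoeff, natDegree_eisensteinFamily ha hd, coeff_eisensteinFamily_self hd]

theorem eval_zero_eisensteinFamily (hd : 2 ≤ d) : (eisensteinFamily a c d).eval 0 = c := by
  simp [eisensteinFamily, zero_pow (show d ≠ 0 by omega), zero_pow (show d - 1 ≠ 0 by omega)]

theorem eval_self_eisensteinFamily (hd : 1 ≤ d) : (eisensteinFamily a c d).eval c = c := by
  obtain ⟨e, rfl⟩ := Nat.exists_eq_add_of_le' hd
  simp only [eisensteinFamily, eval_add, eval_sub, eval_mul, eval_C, eval_pow, eval_X,
    add_tsub_cancel_right]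
  ring

end EisensteinFamily

theorem iterates_of_eisenstein_family_general (a c : ℤ) (ha : a ≠ 0)
    (d : ℕ) (hd : 2 ≤ d)
    (f : ℤ[X]) (hf : f = C a * X ^ d - C (a * c) * X ^ (d - 1) + C c) :
    (∀ n : ℕ, 1 ≤ n →
      (polyIter f n).leadingCoeff = a ^ ((d ^ n - 1) / (d - 1)) ∧
      (∀ i : ℕ, i < (polyIter f n).natDegree → c ∣ (polyIter f n).coeff i) ∧
      (polyIter f n).eval 0 = c) ∧
    {x : ℤ | ∃ n : ℕ, 1 ≤ n ∧ x = (polyIter f n).eval 0}.Finite := by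
  replace hf : f = eisensteinFamily a c d := hf
  have hdeg : f.natDegree = d := hf ▸ natDegree_eisensteinFamily ha (by omega)
  have horbit : ∀ n, 1 ≤ n → (polyIter f n).eval 0 = c := fun n hn =>
    eval_polyIter_of_eval_eq_of_isFixedPt (hf ▸ eval_zero_eisensteinFamily hd)
      (hf ▸ eval_self_eisensteinFamily (by omega)) hn
  refine ⟨fun n hn => ⟨?_, fun i hi => ?_, horbit n hn⟩, ?_⟩
  · rw [leadingCoeff_polyIter (by omega), hdeg, hf, leadingCoeff_eisensteinFamily ha (by omega),
      Nat.geomSum_eq hd]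
  · rw [natDegree_polyIter, hdeg] at hi
    exact dvd_coeff_polyIter (fun j hj => hf ▸ dvd_coeff_eisensteinFamily hj) n i hi.ne
  · refine (Set.finite_singleton c).subset ?_
    rintro x ⟨n, hn, rfl⟩
    exact horbit n hn

/-- For `f(X) = aX^d - acX^{d-1} + c`: every iterate has leading coefficient a power of
`a` (namely `a^{(d^n-1)/(d-1)}`), all other coefficients are multiples of `c`, and
`f^(n)(0) = c`; in particular `0` is pre-periodic under `f`. -/
theorem iterates_of_eisenstein_family (a c : ℤ) (ha : a ≠ 0) (hc : c ≠ 0)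
    (d : ℕ) (hd : 2 ≤ d)
    (f : ℤ[X]) (hf : f = C a * X ^ d - C (a * c) * X ^ (d - 1) + C c) :
    (∀ n : ℕ, 1 ≤ n →
      (polyIter f n).leadingCoeff = a ^ ((d ^ n - 1) / (d - 1)) ∧
      (∀ i : ℕ, i < (polyIter f n).natDegree → c ∣ (polyIter f n).coeff i) ∧
      (polyIter f n).eval 0 = c) ∧
    {x : ℤ | ∃ n : ℕ, 1 ≤ n ∧ x = (polyIter f n).eval 0}.Finite :=
  iterates_of_eisenstein_family_general a c ha d hd f hf
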